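/- arXiv:1912.05815 — 2 statements merged into one kernel-verified Lean document; each statement's English description precedes it below -/
import Mathlib

section
/- Let R be a finite commutative chain ring with maximal ideal ⟨γ⟩ of nilpotency index e, and let λ be a unit of R. Let μ : R[x]/⟨x^N - λ⟩ → (R/⟨γ⟩)[x]/⟨x^N - λ̄⟩ be the coefficientwise reduction map. Let c(x) = γ^ℓ A(x) be a nonzero element with 0 ≤ ℓ ≤ e-1 and μ(A(x)) ≠ 0. Then depth(c(x)) ≥ depth(μ(A(x))). -/
/-!
Multiplication by `γ^ℓ` and reduction modulo `γ` are both additive, so they commute with the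
difference operator. Since `γ^ℓ ≠ 0`, every element killed by `γ^ℓ` is a non-unit, i.e. lies in
the maximal ideal; hence whenever the `i`-th difference of `c = γ^ℓ A` vanishes, so does the
`i`-th difference of `μ(A)`, and depth is the least such `i`.
-/

open IsLocalRing

variable {S : Type*} [CommRing S]

/-- The derivative (difference) operator on sequences/vectors. -/
def der (a : ℕ → S) : ℕ → S := fun k => a (k + 1) - a k

open Classical in
/-- Depth of a vector `a ∈ S^N`. -/
noncomputable def depth (N : ℕ) (a : ℕ → S) : ℕ :=
  if h : ∃ i, i < N ∧ ∀ k, k < N - i → der^[i] a k = 0 then Nat.find h else N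

section Depth

variable {T U : Type*} [CommRing T] [CommRing U]

theorem iterate_der_comp_addMonoidHom (f : S →+ T) (a : ℕ → S) (i : ℕ) :
    der^[i] (fun k => f (a k)) = fun k => f (der^[i] a k) := by
  induction i with
  | zero => rfl
  | succ i ih =>
    rw [Function.iterate_succ_apply', Function.iterate_succ_apply', ih]
    funext k
    simp only [der, map_sub]

theorem depth_le_depth_of_iterate_der_eq_zero {N : ℕ} {a : ℕ → S} {b : ℕ → T}
    (h : ∀ i k, der^[i] a k = 0 → der^[i] b k = 0) : depth N b ≤ depth N a := by
  classical
  unfold depth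
  split_ifs with hb ha ha
  · exact Nat.find_mono fun i ⟨hi, hai⟩ => ⟨hi, fun k hk => h i k (hai k hk)⟩
  · exact (Nat.find_spec hb).1.le
  · obtain ⟨i, hi, hai⟩ := ha
    exact absurd ⟨i, hi, fun k hk => h i k (hai k hk)⟩ hb
  · exact le_rfl

theorem depth_comp_le_depth_comp {N : ℕ} (A : ℕ → U) (f : U →+ S) (g : U →+ T)
    (hfg : ∀ x, f x = 0 → g x = 0) :
    depth N (fun k => g (A k)) ≤ depth N (fun k => f (A k)) :=
  depth_le_depth_of_iterate_der_eq_zero fun i k hf => by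
    rw [iterate_der_comp_addMonoidHom] at hf ⊢
    exact hfg _ hf

end Depth

theorem IsLocalRing.residue_eq_zero_of_mul_eq_zero {R : Type*} [CommRing R] [IsLocalRing R]
    {r x : R} (hr : r ≠ 0) (hrx : r * x = 0) : residue R x = 0 := by
  rw [residue_eq_zero_iff, mem_maximalIdeal, mem_nonunits_iff]
  exact fun hx => hr ((hx.mul_left_eq_zero).mp hrx)

theorem depth_ge_depth_residue_general (R : Type*) [CommRing R] [IsLocalRing R]
    (γ : R)
    (e : ℕ) (hnil' : γ ^ (e - 1) ≠ 0)
    (N : ℕ) (ℓ : ℕ) (hℓ : ℓ ≤ e - 1)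
    (A : ℕ → R) :
    depth N (fun k => γ ^ ℓ * A k) ≥ depth N (fun k => residue R (A k)) := by
  have hγℓ : γ ^ ℓ ≠ 0 := fun h => hnil' (pow_eq_zero_of_le hℓ h)
  exact depth_comp_le_depth_comp A (AddMonoidHom.mulLeft (γ ^ ℓ)) (residue R).toAddMonoidHom
    fun _ => residue_eq_zero_of_mul_eq_zero hγℓ

theorem depth_ge_depth_residue (R : Type*) [CommRing R] [Finite R] [IsLocalRing R]
    (hchain : ∀ I J : Ideal R, I ≤ J ∨ J ≤ I)
    (γ : R) (hγ : maximalIdeal R = Ideal.span {γ})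
    (e : ℕ) (he : 0 < e) (hnil : γ ^ e = 0) (hnil' : γ ^ (e - 1) ≠ 0)
    (lam : R) (hlam : IsUnit lam)
    (N : ℕ) (hN : 0 < N) (ℓ : ℕ) (hℓ : ℓ ≤ e - 1)
    (A : ℕ → R) (hA : ∃ k, k < N ∧ residue R (A k) ≠ 0)
    (hc : ∃ k, k < N ∧ γ ^ ℓ * A k ≠ 0) :
    depth N (fun k => γ ^ ℓ * A k) ≥ depth N (fun k => residue R (A k)) :=
  depth_ge_depth_residue_general R γ e hnil' N ℓ hℓ A
end

section
/- Let F_q be a finite field and η a nonzero element of F_q with η ≠ 1. Let C be a nontrivial η-constacyclic code of length N over F_q with generator polynomial g(x) of degree d. Then the depth spectrum of C is exactly {d+1, d+2, ..., N}; that is, the set of depths of nonzero codewords of C equals {deg g(x) + 1, ..., N}. -/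
open Polynomial

variable {S : Type*} [CommRing S]

/-!
The `i`-th difference of the coefficient vector of `c` is the coefficient window `[i, N)` of
`(1 - X) ^ i * c`. As `deg ((1 - X) ^ i * c) < N + i`, that window vanishes iff the remainder of
`(1 - X) ^ i * c` modulo `X ^ N - η` has degree `< i`. For a codeword `c` and `i ≤ deg g` this
remainder is a multiple of `g` of degree `< deg g`, hence zero; since `1 - X` is coprime to
`X ^ N - η` (as `η ≠ 1`), this forces `c = 0`. Conversely, for `deg g < t ≤ N` the codeword
`c ≡ X ^ (t - 1 - deg g) * g / (1 - X) ^ t` has depth exactly `t`: its `t`-th remainder is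
`X ^ (t - 1 - deg g) * g`, of degree `t - 1`, while a `(t - 1)`-th remainder `r` of degree
`< t - 1` would give `X ^ (t - 1 - deg g) * g = (1 - X) * r`, impossible at `X = 1` because
`g(1) ≠ 0`.
-/

def DerVanishes (N : ℕ) (a : ℕ → S) (i : ℕ) : Prop :=
  ∀ k, k < N - i → der^[i] a k = 0

section Depth

variable {N i j : ℕ} {a : ℕ → S}

theorem DerVanishes.succ (h : DerVanishes N a i) : DerVanishes N a (i + 1) := by
  intro k hk
  rw [Function.iterate_succ_apply', der, h k (by omega), h (k + 1) (by omega), sub_self]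

theorem DerVanishes.mono (h : DerVanishes N a i) (hij : i ≤ j) : DerVanishes N a j := by
  induction j, hij using Nat.le_induction with
  | base => exact h
  | succ j _ ih => exact ih.succ

open Classical in
theorem depth_le_self (N : ℕ) (a : ℕ → S) : depth N a ≤ N := by
  unfold depth
  split_ifs with h
  · exact (Nat.find_spec h).1.le
  · exact le_rfl

open Classical in
theorem depth_le_of_derVanishes (hiN : i < N) (h : DerVanishes N a i) : depth N a ≤ i := by
  rw [depth, dif_pos ⟨i, hiN, h⟩]
  exact Nat.find_min' _ ⟨hiN, h⟩

open Classical in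
theorem lt_depth_of_not_derVanishes (hiN : i < N) (h : ¬DerVanishes N a i) : i < depth N a := by
  unfold depth
  split_ifs with hex
  · rw [Nat.lt_find_iff]
    rintro j hji ⟨-, hj⟩
    exact h (DerVanishes.mono hj hji)
  · exact hiN

end Depth

theorem coeff_one_sub_X_mul_succ (p : S[X]) (m : ℕ) :
    ((1 - X) * p).coeff (m + 1) = p.coeff (m + 1) - p.coeff m := by
  rw [sub_mul, one_mul, coeff_sub, coeff_X_mul]

theorem der_iterate_coeff (p : S[X]) (i k : ℕ) :
    der^[i] p.coeff k = ((1 - X) ^ i * p).coeff (k + i) := by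
  induction i generalizing k with
  | zero => simp
  | succ i ih =>
    rw [Function.iterate_succ_apply', der, ih, ih, pow_succ', mul_assoc, ← add_assoc,
      coeff_one_sub_X_mul_succ, add_right_comm]

theorem derVanishes_coeff_iff {N i : ℕ} (p : S[X]) :
    DerVanishes N p.coeff i ↔ ∀ m, i ≤ m → m < N → ((1 - X) ^ i * p).coeff m = 0 := by
  simp only [DerVanishes, der_iterate_coeff]
  constructor
  · intro h m him hmN
    simpa [Nat.sub_add_cancel him] using h (m - i) (by omega)
  · intro h k hk
    exact h _ (by omega) (by omega)

theorem degree_one_sub_X_mul_lt {p : S[X]} {n : ℕ} (hp : p.degree < n) :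
    ((1 - X) * p).degree < ↑(n + 1) := by
  rw [degree_lt_iff_coeff_zero] at hp ⊢
  rintro (_ | m) hm
  · omega
  · rw [coeff_one_sub_X_mul_succ, hp _ (by omega), hp _ (by omega), sub_self]

theorem degree_divByMonic_lt_of_natDegree_lt_add [Nontrivial S] {f p : S[X]} (hf : f.Monic)
    {t : ℕ} (hp : p.natDegree < f.natDegree + t) : (p /ₘ f).degree < t := by
  rcases eq_or_ne (p /ₘ f) 0 with hq | hq
  · rw [hq, degree_zero]
    exact WithBot.bot_lt_coe t
  have hfp : f.natDegree ≤ p.natDegree :=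
    natDegree_le_natDegree (not_lt.1 (mt (divByMonic_eq_zero_iff hf).2 hq))
  rw [degree_eq_natDegree hq, natDegree_divByMonic p hf]
  exact_mod_cast (by omega : p.natDegree - f.natDegree < t)

section ConstacyclicModulus

variable [Nontrivial S] {η : S} {N : ℕ}

theorem coeff_modByMonic_X_pow_sub_C {p : S[X]} {t m : ℕ} (hp : p.natDegree < N + t)
    (htm : t ≤ m) (hmN : m < N) : (p %ₘ (X ^ N - C η)).coeff m = p.coeff m := by
  have hf : (X ^ N - C η).Monic := monic_X_pow_sub_C η (by omega)
  have hq : (p /ₘ (X ^ N - C η)).coeff m = 0 :=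
    (degree_lt_iff_coeff_zero _ t).1
      (degree_divByMonic_lt_of_natDegree_lt_add hf (by rwa [natDegree_X_pow_sub_C])) m htm
  rw [modByMonic_eq_sub_mul_div, coeff_sub, sub_mul, coeff_sub, coeff_X_pow_mul',
    if_neg (by omega), coeff_C_mul, hq]
  ring

theorem degree_modByMonic_X_pow_sub_C_lt_iff (hN : 0 < N) {p : S[X]} {t : ℕ}
    (hp : p.natDegree < N + t) :
    (p %ₘ (X ^ N - C η)).degree < t ↔ ∀ m, t ≤ m → m < N → p.coeff m = 0 := by
  have hr : (p %ₘ (X ^ N - C η)).degree < N :=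
    (degree_modByMonic_lt p (monic_X_pow_sub_C η hN.ne')).trans_eq (degree_X_pow_sub_C hN η)
  rw [degree_lt_iff_coeff_zero]
  constructor
  · intro h m htm hmN
    rw [← coeff_modByMonic_X_pow_sub_C hp htm hmN]
    exact h m htm
  · intro h m htm
    rcases lt_or_ge m N with hmN | hNm
    · rw [coeff_modByMonic_X_pow_sub_C hp htm hmN]
      exact h m htm hmN
    · exact (degree_lt_iff_coeff_zero _ N).1 hr m hNm

theorem derVanishes_iff_degree_modByMonic_lt (hN : 0 < N) {c : S[X]} (hc : c.natDegree < N)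
    {i : ℕ} :
    DerVanishes N c.coeff i ↔ (((1 - X) ^ i * c) %ₘ (X ^ N - C η)).degree < i := by
  have hdeg : ((1 - X : S[X]) ^ i * c).natDegree < N + i := by
    have h1 : (1 - X : S[X]).natDegree ≤ 1 := by compute_degree
    have := natDegree_pow_le_of_le i h1
    have := natDegree_mul_le (p := (1 - X : S[X]) ^ i) (q := c)
    omega
  rw [derVanishes_coeff_iff, degree_modByMonic_X_pow_sub_C_lt_iff hN hdeg]

end ConstacyclicModulus

theorem eq_zero_of_degree_mul_modByMonic_lt [NoZeroDivisors S] {f g u c : S[X]} (hf : f.Monic)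
    (hu : IsCoprime f u) (hgf : g ∣ f) (hgc : g ∣ c) (hc : c.degree < f.degree)
    (h : ((u * c) %ₘ f).degree < g.degree) : c = 0 := by
  have hgr : g ∣ (u * c) %ₘ f := by
    rw [modByMonic_eq_sub_mul_div]
    exact dvd_sub (hgc.mul_left u) (hgf.mul_right _)
  have hfuc : f ∣ u * c := (modByMonic_eq_zero_iff_dvd hf).1 (eq_zero_of_dvd_of_degree_lt hgr h)
  exact eq_zero_of_dvd_of_degree_lt (hu.dvd_of_dvd_mul_left hfuc) hc

section Field

variable {F : Type*} [Field F] {η : F} {N : ℕ}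

theorem isCoprime_X_pow_sub_C_one_sub_X (hη : η ≠ 1) : IsCoprime (X ^ N - C η) (1 - X : F[X]) := by
  have h : IsCoprime (X - C 1) (X ^ N - C η) :=
    (irreducible_X_sub_C 1).coprime_iff_not_dvd.2 <| by
      rw [dvd_iff_isRoot, IsRoot, eval_sub, eval_pow, eval_X, eval_C, one_pow, sub_eq_zero]
      exact Ne.symm hη
  rw [show (1 - X : F[X]) = -(X - C 1) by rw [C_1, neg_sub]]
  exact h.symm.neg_right

theorem eval_one_ne_zero_of_dvd (hη : η ≠ 1) {g : F[X]} (hg : g ∣ X ^ N - C η) :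
    g.eval 1 ≠ 0 := by
  obtain ⟨h, hh⟩ := hg
  intro hg1
  have := congrArg (eval 1) hh
  rw [eval_sub, eval_pow, eval_X, eval_C, one_pow, eval_mul, hg1, zero_mul, sub_eq_zero] at this
  exact hη this.symm

end Field

section Constacyclic

variable {F : Type*} [Field F] {η : F} {N : ℕ} {g : F[X]}

theorem natDegree_lt_depth (hη : η ≠ 1) (hg : g.Monic) (hgf : g ∣ X ^ N - C η) {c : F[X]}
    (hc0 : c ≠ 0) (hcN : c.natDegree < N) (hgc : g ∣ c) : g.natDegree < depth N c.coeff := by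
  have hgN : g.natDegree < N := (natDegree_le_of_dvd hgc hc0).trans_lt hcN
  have hN : 0 < N := by omega
  refine lt_depth_of_not_derVanishes hgN fun hvan => hc0 ?_
  refine eq_zero_of_degree_mul_modByMonic_lt (monic_X_pow_sub_C η hN.ne')
    ((isCoprime_X_pow_sub_C_one_sub_X hη).pow_right (n := g.natDegree)) hgf hgc ?_ ?_
  · rw [degree_X_pow_sub_C hN]
    exact (natDegree_lt_iff_degree_lt hc0).1 hcN
  · rw [degree_eq_natDegree hg.ne_zero]
    exact (derVanishes_iff_degree_modByMonic_lt (η := η) hN hcN).1 hvan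

theorem exists_depth_eq (hη : η ≠ 1) (hg : g.Monic) (hgf : g ∣ X ^ N - C η) {t : ℕ}
    (hgt : g.natDegree < t) (htN : t ≤ N) :
    ∃ c : F[X], c ≠ 0 ∧ c.natDegree < N ∧ g ∣ c ∧ depth N c.coeff = t := by
  obtain ⟨s, rfl⟩ := Nat.exists_eq_add_of_lt hgt
  have hN : 0 < N := by omega
  set f : F[X] := X ^ N - C η
  have hf : f.Monic := monic_X_pow_sub_C η hN.ne'
  have hfdeg : f.degree = N := degree_X_pow_sub_C hN η
  obtain ⟨a, b, hab⟩ :=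
    (isCoprime_X_pow_sub_C_one_sub_X (N := N) hη).pow_right (n := g.natDegree + s + 1)
  set w : F[X] := X ^ s * g with hw_def
  have hw0 : w ≠ 0 := mul_ne_zero (pow_ne_zero _ X_ne_zero) hg.ne_zero
  have hwdeg : w.degree < ↑(g.natDegree + s + 1) := by
    rw [degree_eq_natDegree hw0, hw_def, natDegree_mul (pow_ne_zero _ X_ne_zero) hg.ne_zero,
      natDegree_X_pow]
    exact_mod_cast (by omega : s + g.natDegree < g.natDegree + s + 1)
  -- `c` represents `w / (1 - X) ^ (deg g + s + 1)` modulo `f`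
  set c : F[X] := (b * w) %ₘ f with hc_def
  have hmod : ((1 - X) ^ (g.natDegree + s + 1) * c) %ₘ f = w := by
    rw [modByMonic_eq_of_dvd_sub hf (p₂ := w), (modByMonic_eq_self_iff hf).2]
    · exact hwdeg.trans_le (hfdeg ▸ by exact_mod_cast htN)
    · have hsplit : (1 - X) ^ (g.natDegree + s + 1) * c - w =
          (1 - X) ^ (g.natDegree + s + 1) * (c - b * w) - f * (a * w) := by
        linear_combination w * hab
      rw [hsplit]
      exact dvd_sub ((dvd_modByMonic_sub (b * w) f).mul_left _) (dvd_mul_right f _)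
  have hc0 : c ≠ 0 := fun h => hw0 (by rw [← hmod, h, mul_zero, zero_modByMonic])
  have hcN : c.natDegree < N :=
    (natDegree_lt_iff_degree_lt hc0).2 ((degree_modByMonic_lt _ hf).trans_eq hfdeg)
  have hnot : ¬DerVanishes N c.coeff (g.natDegree + s) := by
    rw [derVanishes_iff_degree_modByMonic_lt (η := η) hN hcN]
    set r := ((1 - X) ^ (g.natDegree + s) * c) %ₘ f
    intro hr
    have hwr : w = (1 - X) * r := by
      rw [← hmod, modByMonic_eq_of_dvd_sub hf (p₂ := (1 - X) * r), (modByMonic_eq_self_iff hf).2]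
      · exact (degree_one_sub_X_mul_lt hr).trans_le (hfdeg ▸ by exact_mod_cast htN)
      · have hsplit : (1 - X) ^ (g.natDegree + s + 1) * c - (1 - X) * r =
            -((1 - X) * (r - (1 - X) ^ (g.natDegree + s) * c)) := by
          ring
        rw [hsplit]
        exact ((dvd_modByMonic_sub _ f).mul_left _).neg_right
    apply eval_one_ne_zero_of_dvd hη hgf
    simpa [hw_def] using congrArg (eval 1) hwr
  have hgc : g ∣ c := by
    rw [hc_def, modByMonic_eq_sub_mul_div]
    exact dvd_sub ((dvd_mul_left g _).mul_left b) (hgf.mul_right _)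
  refine ⟨c, hc0, hcN, hgc, le_antisymm ?_ (lt_depth_of_not_derVanishes (by omega) hnot)⟩
  rcases htN.lt_or_eq with htN | rfl
  · refine depth_le_of_derVanishes htN ((derVanishes_iff_degree_modByMonic_lt (η := η) hN hcN).2 ?_)
    rwa [hmod]
  · exact depth_le_self _ _

end Constacyclic

theorem depth_spectrum_constacyclic_general (F : Type*) [Field F]
    (N : ℕ) (η : F) (hη1 : η ≠ 1)
    (g : Polynomial F) (hg : g.Monic) (hdvd : g ∣ (X ^ N - C η))
    (d : ℕ) (hd : g.natDegree = d) :
    {t : ℕ | ∃ c : Polynomial F, c ≠ 0 ∧ c.natDegree < N ∧ g ∣ c ∧ depth N c.coeff = t} =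
      Set.Icc (d + 1) N := by
  subst hd
  ext t
  constructor
  · rintro ⟨c, hc0, hcN, hgc, rfl⟩
    exact ⟨natDegree_lt_depth hη1 hg hdvd hc0 hcN hgc, depth_le_self _ _⟩
  · rintro ⟨hgt, htN⟩
    exact exists_depth_eq hη1 hg hdvd hgt htN

theorem depth_spectrum_constacyclic (F : Type*) [Field F] [Fintype F]
    (N : ℕ) (η : F) (hη0 : η ≠ 0) (hη1 : η ≠ 1)
    (g : Polynomial F) (hg : g.Monic) (hdvd : g ∣ (X ^ N - C η))
    (d : ℕ) (hd : g.natDegree = d) (hd0 : 0 < d) (hdN : d < N) :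
    {t : ℕ | ∃ c : Polynomial F, c ≠ 0 ∧ c.natDegree < N ∧ g ∣ c ∧ depth N c.coeff = t} =
      Set.Icc (d + 1) N :=
  depth_spectrum_constacyclic_general F N η hη1 g hg hdvd d hd
end
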